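/- arXiv:2503.13526 — 4 statements merged into one kernel-verified Lean document; each statement's English description precedes it below -/
import Mathlib

section
/- For $N \geq 1$ let $\tilde{M}(\beta) \in \mathbb{C}^{N \times N}$ be the strictly lower triangular Toeplitz matrix with entries $\tilde{M}(\beta)_{ij} = \beta^{i-j-1}$ for $i > j$ and $0$ otherwise. If $|\beta| \leq 1$, then for every $k \geq 1$ the infinity operator norm satisfies $\|\tilde{M}(\beta)^k\|_\infty \leq \binom{N-1}{k}$; in particular $\tilde{M}(\beta)^k = 0$ for $k \geq N$. -/
open scoped BigOperators

/-- The strictly lower triangular Toeplitz matrix `M̃(β)` with entries `β^(i-j-1)` for `i > j`. -/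
def pararealToeplitz (N : ℕ) (β : ℂ) : Matrix (Fin N) (Fin N) ℂ :=
  fun i j => if (j : ℕ) < (i : ℕ) then β ^ ((i : ℕ) - (j : ℕ) - 1) else 0

/-- The maximum absolute row sum (infinity operator) norm. -/
noncomputable def infNorm {N : ℕ} (M : Matrix (Fin N) (Fin N) ℂ) : ℝ :=
  ⨆ i, ∑ j, ‖M i j‖

lemma hockey (k n : ℕ) : ∑ d ∈ Finset.range n, d.choose k = n.choose (k+1) := by
  induction n with
  | zero => simp
  | succ n ih =>
    rw [Finset.sum_range_succ, ih, Nat.choose_succ_succ, Nat.succ_eq_add_one]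
    omega

lemma sum_ite_choose (k a b n : ℕ) (hb : b ≤ n) :
    ∑ l ∈ Finset.range n, (if a ≤ l ∧ l < b then (b - l - 1).choose k else 0)
      = (b - a).choose (k+1) := by
  rw [← Finset.sum_filter]
  have hfil : (Finset.range n).filter (fun l => a ≤ l ∧ l < b) = Finset.Ico a b := by
    ext l
    simp only [Finset.mem_filter, Finset.mem_range, Finset.mem_Ico]
    omega
  rw [hfil, Finset.sum_Ico_eq_sum_range]
  have : ∀ m ∈ Finset.range (b - a), (b - (a + m) - 1).choose k
      = (fun d => d.choose k) ((b - a) - 1 - m) := by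
    intro m hm
    simp only [Finset.mem_range] at hm
    congr 1
    omega
  rw [Finset.sum_congr rfl this]
  exact (Finset.sum_range_reflect (fun d => d.choose k) (b - a)).trans (hockey k (b - a))

lemma entry_bound (N : ℕ) (β : ℂ) (hβ : ‖β‖ ≤ 1) (k : ℕ) :
    ∀ i j : Fin N, ‖((pararealToeplitz N β) ^ (k+1)) i j‖
      ≤ if (j : ℕ) < (i : ℕ) then ((((i:ℕ) - j - 1).choose k : ℕ) : ℝ) else 0 := by
  induction k with
  | zero =>
    intro i j
    rw [pow_one]
    unfold pararealToeplitz
    split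
    · simp only [Nat.choose_zero_right, Nat.cast_one]
      rw [norm_pow]
      exact pow_le_one₀ (norm_nonneg β) hβ
    · simp
  | succ k ih =>
    intro i j
    rw [pow_succ, Matrix.mul_apply]
    calc ‖∑ l, ((pararealToeplitz N β) ^ (k+1)) i l * pararealToeplitz N β l j‖
        ≤ ∑ l, ‖((pararealToeplitz N β) ^ (k+1)) i l‖
            * ‖pararealToeplitz N β l j‖ := by
          refine le_trans (norm_sum_le _ _) ?_
          simp [map_mul]
      _ ≤ ∑ l : Fin N, (if (j:ℕ) < (l:ℕ) ∧ (l:ℕ) < (i:ℕ)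
            then ((((i:ℕ) - l - 1).choose k : ℕ) : ℝ) else 0) := by
          refine Finset.sum_le_sum fun l _ => ?_
          by_cases hli : (l:ℕ) < (i:ℕ)
          · by_cases hjl : (j:ℕ) < (l:ℕ)
            · simp only [hli, hjl, and_self, if_true]
              have h1 := ih i l
              rw [if_pos hli] at h1
              have h2 : ‖pararealToeplitz N β l j‖ ≤ 1 := by
                unfold pararealToeplitz
                rw [if_pos hjl, norm_pow]
                exact pow_le_one₀ (norm_nonneg β) hβ
              calc _ ≤ ((((i:ℕ) - l - 1).choose k : ℕ) : ℝ) * 1 :=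
                    mul_le_mul h1 h2 (norm_nonneg _) (Nat.cast_nonneg _)
                _ = _ := mul_one _
            · have : pararealToeplitz N β l j = 0 := by
                unfold pararealToeplitz; rw [if_neg hjl]
              rw [this]
              simp [hjl]
          · have h1 := ih i l
            rw [if_neg hli] at h1
            have : ‖((pararealToeplitz N β) ^ (k+1)) i l‖ = 0 :=
              le_antisymm h1 (norm_nonneg _)
            rw [this, zero_mul]
            split <;> positivity
      _ = if (j:ℕ) < (i:ℕ) then ((((i:ℕ) - j - 1).choose (k+1) : ℕ) : ℝ) else 0 := by
          rw [Fin.sum_univ_eq_sum_range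
            (fun l => if (j:ℕ) < l ∧ l < (i:ℕ) then ((((i:ℕ) - l - 1).choose k : ℕ) : ℝ) else 0)]
          have := sum_ite_choose k ((j:ℕ)+1) (i:ℕ) N i.isLt.le
          have hcast : ∑ l ∈ Finset.range N,
              (if (j:ℕ) < l ∧ l < (i:ℕ) then ((((i:ℕ) - l - 1).choose k : ℕ) : ℝ) else 0)
              = (((((i:ℕ) - ((j:ℕ)+1)).choose (k+1) : ℕ)) : ℝ) := by
            rw [← this, Nat.cast_sum]
            refine Finset.sum_congr rfl fun l _ => ?_
            have hiff : ((j:ℕ) < l ∧ l < (i:ℕ)) ↔ ((j:ℕ)+1 ≤ l ∧ l < (i:ℕ)) := by omega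
            rw [Nat.cast_ite, Nat.cast_zero]
            simp only [hiff]
          rw [hcast]
          by_cases hji : (j:ℕ) < (i:ℕ)
          · rw [if_pos hji]
            congr 2 <;> omega
          · rw [if_neg hji]
            have : (i:ℕ) - ((j:ℕ)+1) = 0 := by omega
            simp [this]

/-- Superlinear Parareal bound: if `|β| ≤ 1` then `‖M̃(β)^k‖_∞ ≤ (N-1 choose k)`;
in particular `M̃(β)^k = 0` for `k ≥ N`. -/
theorem pararealToeplitz_pow_infNorm_le_choose
    (N : ℕ) (hN : 1 ≤ N) (β : ℂ) (hβ : ‖β‖ ≤ 1) :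
    (∀ k, 1 ≤ k → infNorm ((pararealToeplitz N β) ^ k) ≤ ((N - 1).choose k : ℝ)) ∧
      (∀ k, N ≤ k → (pararealToeplitz N β) ^ k = 0) := by
  have : Nonempty (Fin N) := ⟨⟨0, hN⟩⟩
  constructor
  · intro k hk
    obtain ⟨k', rfl⟩ : ∃ k', k = k' + 1 := ⟨k - 1, by omega⟩
    unfold infNorm
    refine ciSup_le fun i => ?_
    calc ∑ j, ‖((pararealToeplitz N β) ^ (k'+1)) i j‖
        ≤ ∑ j : Fin N, (if (j:ℕ) < (i:ℕ)
            then ((((i:ℕ) - j - 1).choose k' : ℕ) : ℝ) else 0) :=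
          Finset.sum_le_sum fun j _ => entry_bound N β hβ k' i j
      _ = (((i:ℕ).choose (k'+1) : ℕ) : ℝ) := by
          rw [Fin.sum_univ_eq_sum_range
            (fun j => if j < (i:ℕ) then ((((i:ℕ) - j - 1).choose k' : ℕ) : ℝ) else 0)]
          have := sum_ite_choose k' 0 (i:ℕ) N i.isLt.le
          rw [Nat.sub_zero] at this
          rw [← this]
          push_cast
          refine Finset.sum_congr rfl fun l _ => ?_
          simp
      _ ≤ ((N - 1).choose (k'+1) : ℝ) := by
          have := Nat.choose_le_choose (k'+1) (show (i:ℕ) ≤ N - 1 by omega)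
          exact_mod_cast this
  · intro k hk
    ext i j
    obtain ⟨k', rfl⟩ : ∃ k', k = k' + 1 := ⟨k - 1, by omega⟩
    have h := entry_bound N β hβ k' i j
    have hzero : (if (j:ℕ) < (i:ℕ) then ((((i:ℕ) - j - 1).choose k' : ℕ) : ℝ) else 0) = 0 := by
      split
      · rw [Nat.choose_eq_zero_of_lt (by omega)]
        simp
      · rfl
    rw [hzero] at h
    have : ‖((pararealToeplitz N β) ^ (k'+1)) i j‖ = 0 :=
      le_antisymm h (norm_nonneg _)
    simpa using this
end

section
/- Let $A \in \mathbb{R}^{d \times d}$, let $g : [0,T] \to \mathbb{R}^d$ be continuous, and let $0 = T_0 < T_1 < \dots < T_N = T$. Suppose for each $n = 1, \dots, N$, $v_n : [T_{n-1}, T_n] \to \mathbb{R}^d$ solves $v_n' = A v_n + g$ with $v_n(T_{n-1}) = 0$, and $w_n : [T_{n-1}, T] \to \mathbb{R}^d$ solves $w_n' = A w_n$ with $w_n(T_{n-1}) = v_{n-1}(T_{n-1})$, where $v_0(T_0) := u_0$. Then the solution $u$ of $u' = A u + g$, $u(0) = u_0$, satisfies $u(t) = v_n(t) + \sum_{j=1}^n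 w_j(t)$ for all $t \in [T_{n-1}, T_n]$ and each $n = 1, \dots, N$. -/
open scoped BigOperators

open Set

/-- Exactness of the ParaExp decomposition: the inhomogeneous subinterval solutions `v_n`
(with zero initial data) and the homogeneous propagations `w_n` sum to the exact solution
of `u' = A u + g`, `u(0) = u₀`. -/
theorem paraexp_exactness
    (d N : ℕ) (hN : 1 ≤ N)
    (A : Matrix (Fin d) (Fin d) ℝ) (g : ℝ → Fin d → ℝ) (hg : Continuous g)
    (u0 : Fin d → ℝ) (T : ℕ → ℝ) (hT0 : T 0 = 0)
    (hTmono : ∀ n < N, T n < T (n + 1))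
    (v w : ℕ → ℝ → Fin d → ℝ) (u : ℝ → Fin d → ℝ)
    (hv0 : v 0 (T 0) = u0)
    (hv : ∀ n, 1 ≤ n → n ≤ N →
      (∀ t ∈ Set.Icc (T (n - 1)) (T n),
        HasDerivWithinAt (v n) (A.mulVec (v n t) + g t) (Set.Icc (T (n - 1)) (T n)) t) ∧
      v n (T (n - 1)) = 0)
    (hw : ∀ n, 1 ≤ n → n ≤ N →
      (∀ t ∈ Set.Icc (T (n - 1)) (T N),
        HasDerivWithinAt (w n) (A.mulVec (w n t)) (Set.Icc (T (n - 1)) (T N)) t) ∧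
      w n (T (n - 1)) = v (n - 1) (T (n - 1)))
    (hu : ∀ t ∈ Set.Icc (T 0) (T N),
      HasDerivWithinAt u (A.mulVec (u t) + g t) (Set.Icc (T 0) (T N)) t)
    (hu0 : u (T 0) = u0) :
    ∀ n, 1 ≤ n → n ≤ N → ∀ t ∈ Set.Icc (T (n - 1)) (T n),
      u t = v n t + ∑ j ∈ Finset.Icc 1 n, w j t := by
  -- monotonicity of T
  have hTle : ∀ j k : ℕ, j ≤ k → k ≤ N → T j ≤ T k := by
    intro j k
    induction k generalizing j with
    | zero =>
        intro hjk _
        obtain rfl : j = 0 := by omega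
        exact le_rfl
    | succ m ih =>
        intro hjk hkN
        rcases Nat.lt_succ_iff_lt_or_eq.mp (Nat.lt_succ_of_le hjk) with h | h
        · exact (ih j (by omega) (by omega)).trans (hTmono m (by omega)).le
        · subst h; exact le_rfl
  -- Lipschitz structure
  set L : (Fin d → ℝ) →L[ℝ] (Fin d → ℝ) :=
    LinearMap.toContinuousLinearMap (Matrix.mulVecLin A) with hL
  have hLx : ∀ x, L x = A.mulVec x := fun x => rfl
  have hlip : ∀ t : ℝ, LipschitzOnWith ‖L‖₊ (fun x => A.mulVec x + g t) univ := by
    intro t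
    apply LipschitzWith.lipschitzOnWith
    apply LipschitzWith.of_dist_le_mul
    intro x y
    have : dist (A.mulVec x + g t) (A.mulVec y + g t) = dist (L x) (L y) := by
      rw [hLx, hLx, dist_add_right]
    rw [this]
    exact L.lipschitz.dist_le_mul x y
  -- key step: uniqueness on one subinterval given matching initial data
  have key : ∀ n : ℕ, 1 ≤ n → n ≤ N →
      u (T (n - 1)) = v n (T (n - 1)) + ∑ j ∈ Finset.Icc 1 n, w j (T (n - 1)) →
      ∀ t ∈ Set.Icc (T (n - 1)) (T n),
        u t = v n t + ∑ j ∈ Finset.Icc 1 n, w j t := by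
    intro n hn1 hnN hinit
    set F : ℝ → Fin d → ℝ := fun t => v n t + ∑ j ∈ Finset.Icc 1 n, w j t with hF
    have hsub : Icc (T (n - 1)) (T n) ⊆ Icc (T 0) (T N) :=
      Icc_subset_Icc (hTle 0 (n - 1) (by omega) (by omega)) (hTle n N hnN le_rfl)
    -- F has the right derivative within Icc (T (n-1)) (T n)
    have hFderiv : ∀ t ∈ Icc (T (n - 1)) (T n),
        HasDerivWithinAt F (A.mulVec (F t) + g t) (Icc (T (n - 1)) (T n)) t := by
      intro t ht
      have hvd := (hv n hn1 hnN).1 t ht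
      have hwd : ∀ j ∈ Finset.Icc 1 n, HasDerivWithinAt (w j) (A.mulVec (w j t))
          (Icc (T (n - 1)) (T n)) t := by
        intro j hj
        rw [Finset.mem_Icc] at hj
        have hsubj : Icc (T (n - 1)) (T n) ⊆ Icc (T (j - 1)) (T N) :=
          Icc_subset_Icc (hTle (j - 1) (n - 1) (by omega) (by omega)) (hTle n N hnN le_rfl)
        exact ((hw j hj.1 (hj.2.trans hnN)).1 t (hsubj ht)).mono hsubj
      have hsum := HasDerivWithinAt.sum hwd
      have := hvd.add hsum
      convert this using 1
      show A.mulVec (v n t + ∑ j ∈ Finset.Icc 1 n, w j t) + g t = _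
      rw [Matrix.mulVec_add]
      have : A.mulVec (∑ j ∈ Finset.Icc 1 n, w j t) =
          ∑ j ∈ Finset.Icc 1 n, A.mulVec (w j t) := by
        simp only [← Matrix.mulVecLin_apply]
        exact map_sum (Matrix.mulVecLin A) _ _
      rw [this]
      abel
      · rfl
      · rfl
      · rfl
      · funext s; simp [F, Finset.sum_apply]
    -- apply uniqueness of ODE solutions
    have hucont : ContinuousOn u (Icc (T (n - 1)) (T n)) := by
      intro t ht
      exact ((hu t (hsub ht)).continuousWithinAt).mono hsub
    have hFcont : ContinuousOn F (Icc (T (n - 1)) (T n)) := by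
      intro t ht
      exact ((hFderiv t ht).continuousWithinAt)
    have hu' : ∀ t ∈ Ico (T (n - 1)) (T n),
        HasDerivWithinAt u (A.mulVec (u t) + g t) (Ici t) t := by
      intro t ht
      have hmem : Icc (T 0) (T N) ∈ nhdsWithin t (Ici t) := by
        apply Filter.mem_of_superset (Icc_mem_nhdsGE_of_mem
          (⟨le_rfl, lt_of_lt_of_le ht.2 (hTle n N hnN le_rfl)⟩ : t ∈ Ico t (T N)))
        exact Icc_subset_Icc ((hTle 0 (n-1) (by omega) (by omega)).trans ht.1) le_rfl
      exact (hu t (hsub ⟨ht.1, ht.2.le⟩)).mono_of_mem_nhdsWithin hmem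
    have hF' : ∀ t ∈ Ico (T (n - 1)) (T n),
        HasDerivWithinAt F (A.mulVec (F t) + g t) (Ici t) t := by
      intro t ht
      have hmem : Icc (T (n - 1)) (T n) ∈ nhdsWithin t (Ici t) := by
        apply Filter.mem_of_superset (Icc_mem_nhdsGE_of_mem
          (⟨le_rfl, ht.2⟩ : t ∈ Ico t (T n)))
        exact Icc_subset_Icc ht.1 le_rfl
      exact (hFderiv t ⟨ht.1, ht.2.le⟩).mono_of_mem_nhdsWithin hmem
    have heq := ODE_solution_unique_of_mem_Icc_right
      (v := fun t x => A.mulVec x + g t) (s := fun _ => univ) (K := ‖L‖₊)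
      (fun t _ => hlip t) hucont hu' (fun _ _ => mem_univ _) hFcont hF' (fun _ _ => mem_univ _) hinit
    intro t ht
    exact heq ht
  -- induction on n
  intro n hn1
  induction n, hn1 using Nat.le_induction with
  | base =>
      intro h1N t ht
      apply key 1 le_rfl h1N _ t ht
      have h1 : (1 : ℕ) - 1 = 0 := rfl
      rw [h1, hu0, (hv 1 le_rfl h1N).2]
      have hw1 := (hw 1 le_rfl h1N).2
      rw [h1] at hw1
      simp [hw1, hv0]
  | succ n hn ih =>
      intro hnN t ht
      have hnN' : n ≤ N := by omega
      apply key (n + 1) (by omega) hnN _ t ht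
      have hstep : (n + 1) - 1 = n := rfl
      rw [hstep]
      have hTn : T n ∈ Icc (T (n - 1)) (T n) := ⟨hTle (n-1) n (by omega) (by omega), le_rfl⟩
      have hIH := ih hnN' (T n) hTn
      rw [hIH]
      have hvn1 : v (n + 1) (T n) = 0 := by
        have := (hv (n + 1) (by omega) hnN).2
        rwa [hstep] at this
      have hwn1 : w (n + 1) (T n) = v n (T n) := by
        have := (hw (n + 1) (by omega) hnN).2
        rwa [hstep] at this
      rw [Finset.sum_Icc_succ_top (by omega : 1 ≤ n + 1), hvn1, hwn1]
      abel
end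

section
/- Let $0 < \alpha < 1$ and let $C_\alpha \in \mathbb{R}^{N\times N}$ be as above with eigenvector matrix $V_\alpha = \Lambda_\alpha F^*$, $\Lambda_\alpha = \mathrm{diag}(1, \alpha^{-1/N}, \dots, \alpha^{-(N-1)/N})$. Then the spectral condition number satisfies $\mathrm{Cond}_2(V_\alpha) = \|V_\alpha\|_2 \|V_\alpha^{-1}\|_2 = \alpha^{-(N-1)/N} \leq \frac{1}{\alpha}$. -/
open Complex
open scoped Real

/-- The spectral (ℓ²-operator) condition number of a square complex matrix. -/
noncomputable def cond2 {N : ℕ} (M : Matrix (Fin N) (Fin N) ℂ) : ℝ :=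
  ‖Matrix.toEuclideanCLM (𝕜 := ℂ) M‖ * ‖Matrix.toEuclideanCLM (𝕜 := ℂ) M⁻¹‖

/-- Operator norm of a diagonal matrix whose entrywise max norm is `M`. -/
lemma norm_toEuclideanCLM_diagonal {N : ℕ} (d : Fin N → ℂ) (M : ℝ) (k0 : Fin N)
    (hle : ∀ k, ‖d k‖ ≤ M) (heq : ‖d k0‖ = M) :
    ‖Matrix.toEuclideanCLM (𝕜 := ℂ) (Matrix.diagonal d)‖ = M := by
  set T := Matrix.toEuclideanCLM (𝕜 := ℂ) (Matrix.diagonal d) with hT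
  have hM0 : 0 ≤ M := heq ▸ norm_nonneg _
  have hTx : ∀ (x : EuclideanSpace ℂ (Fin N)) (j : Fin N), T x j = d j * x j := by
    intro x j
    have h := congrFun (Matrix.ofLp_toEuclideanCLM (𝕜 := ℂ) (Matrix.diagonal d) x) j
    exact h.trans (Matrix.mulVec_diagonal _ _ _)
  refine le_antisymm ?_ ?_
  · refine T.opNorm_le_bound hM0 (fun x => ?_)
    rw [EuclideanSpace.norm_eq, EuclideanSpace.norm_eq]
    rw [← Real.sqrt_sq hM0, ← Real.sqrt_mul (sq_nonneg M)]
    refine Real.sqrt_le_sqrt ?_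
    rw [Finset.mul_sum]
    refine Finset.sum_le_sum fun i _ => ?_
    rw [hTx x i, norm_mul, mul_pow]
    have h2 : ‖d i‖ ^ 2 ≤ M ^ 2 := pow_le_pow_left₀ (norm_nonneg _) (hle i) 2
    exact mul_le_mul_of_nonneg_right h2 (by positivity)
  · have h := T.le_opNorm (EuclideanSpace.single k0 1)
    have h1 : ‖(EuclideanSpace.single k0 (1:ℂ))‖ = 1 := by
      rw [EuclideanSpace.norm_single]; simp
    have h2 : T (EuclideanSpace.single k0 1) = EuclideanSpace.single k0 (d k0) := by
      ext j
      rw [hTx]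
      by_cases hj : j = k0 <;> simp [EuclideanSpace.single_apply, hj]
    rw [h1, h2, EuclideanSpace.norm_single, mul_one] at h
    exact heq ▸ h

/-- The unitary DFT matrix satisfies `Fᴴ F = 1`. -/
lemma dft_conjTranspose_mul_self {N : ℕ} (hN : 0 < N) (F : Matrix (Fin N) (Fin N) ℂ)
    (hF : ∀ j k : Fin N, F j k =
      (1 / Real.sqrt N : ℝ) * Complex.exp (2 * π * I / N) ^ ((j : ℕ) * (k : ℕ))) :
    F.conjTranspose * F = 1 := by
  set ω : ℂ := Complex.exp (2 * π * I / N) with hω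
  have hζ : IsPrimitiveRoot ω N := Complex.isPrimitiveRoot_exp N hN.ne'
  have hω0 : ω ≠ 0 := Complex.exp_ne_zero _
  have hωN : ω ^ N = 1 := hζ.pow_eq_one
  have hconj : (starRingEnd ℂ) ω = ω⁻¹ := by
    rw [hω, ← Complex.exp_conj, ← Complex.exp_neg]
    congr 1
    simp [map_div₀, Complex.conj_I, Complex.conj_ofReal, map_ofNat]
    ring
  have hc : ((1 / Real.sqrt N : ℝ) : ℂ) * ((1 / Real.sqrt N : ℝ) : ℂ) = (N : ℂ)⁻¹ := by
    rw [← Complex.ofReal_mul]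
    rw [div_mul_div_comm, one_mul, Real.mul_self_sqrt (Nat.cast_nonneg N)]
    push_cast
    rw [one_div]
  ext k l
  rw [Matrix.mul_apply, Matrix.one_apply]
  have hterm : ∀ j : Fin N, F.conjTranspose k j * F j l =
      (N : ℂ)⁻¹ * ((ω ^ (k : ℕ))⁻¹ * ω ^ (l : ℕ)) ^ (j : ℕ) := by
    intro j
    rw [Matrix.conjTranspose_apply, hF, hF]
    rw [star_mul', star_pow, RCLike.star_def, hconj, Complex.conj_ofReal]
    rw [mul_mul_mul_comm, hc]
    congr 1
    rw [Nat.mul_comm (j:ℕ) (k:ℕ), Nat.mul_comm (j:ℕ) (l:ℕ), pow_mul, pow_mul, mul_pow,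
      inv_pow]
  rw [Finset.sum_congr rfl (fun j _ => hterm j), ← Finset.mul_sum]
  set z : ℂ := (ω ^ (k : ℕ))⁻¹ * ω ^ (l : ℕ) with hz
  have hsum : ∑ j : Fin N, z ^ (j : ℕ) = ∑ j ∈ Finset.range N, z ^ j :=
    Fin.sum_univ_eq_sum_range _ _
  by_cases hkl : k = l
  · subst hkl
    have : z = 1 := inv_mul_cancel₀ (pow_ne_zero _ hω0)
    rw [if_pos rfl, hsum, this]
    simp
    exact inv_mul_cancel₀ (Nat.cast_ne_zero.mpr hN.ne')
  · have hz1 : z ≠ 1 := by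
      intro h
      apply hkl
      have : ω ^ (k : ℕ) = ω ^ (l : ℕ) := by
        field_simp [hz] at h
        rw [hz, inv_mul_eq_one₀ (pow_ne_zero _ hω0)] at h
        exact h
      exact Fin.ext (hζ.pow_inj k.isLt l.isLt this)
    have hzN : z ^ N = 1 := by
      rw [hz, mul_pow, inv_pow, ← pow_mul, ← pow_mul, Nat.mul_comm (k:ℕ) N,
        Nat.mul_comm (l:ℕ) N, pow_mul, pow_mul, hωN, one_pow, one_pow, inv_one, one_mul]
    rw [if_neg hkl, hsum, geom_sum_eq hz1, hzN]
    simp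

/-- For `0 < α < 1`, the eigenvector matrix `V_α = Λ_α F*` of the `α`-circulant matrix,
with `Λ_α = diag(α^0, α^{-1/N}, …, α^{-(N-1)/N})` and `F` the unitary DFT matrix, has
spectral condition number `α^{-(N-1)/N} ≤ 1/α`. -/
theorem alphaCirculant_eigenvector_cond
    (N : ℕ) (hN : 0 < N) (α : ℝ) (hα0 : 0 < α) (hα1 : α < 1)
    (F Λα V : Matrix (Fin N) (Fin N) ℂ)
    (hF : ∀ j k : Fin N, F j k =
      (1 / Real.sqrt N : ℝ) * Complex.exp (2 * π * I / N) ^ ((j : ℕ) * (k : ℕ)))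
    (hΛ : Λα = Matrix.diagonal fun k : Fin N => ((α ^ (-(k : ℝ) / N) : ℝ) : ℂ))
    (hV : V = Λα * F.conjTranspose) :
    cond2 V = α ^ (-((N : ℝ) - 1) / N) ∧ cond2 V ≤ 1 / α := by
  have hFF : F.conjTranspose * F = 1 := dft_conjTranspose_mul_self hN F hF
  set M : ℝ := α ^ (-((N : ℝ) - 1) / N) with hM
  have hM0 : 0 < M := Real.rpow_pos_of_pos hα0 _
  set d : Fin N → ℝ := fun k => α ^ (-(k : ℝ) / N) with hd
  set e : Fin N → ℝ := fun k => α ^ ((k : ℝ) / N) with he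
  have hd0 : ∀ k, 0 < d k := fun k => Real.rpow_pos_of_pos hα0 _
  have he0 : ∀ k, 0 < e k := fun k => Real.rpow_pos_of_pos hα0 _
  -- d k ≤ M
  have hdM : ∀ k : Fin N, d k ≤ M := by
    intro k
    refine Real.rpow_le_rpow_of_exponent_ge hα0 hα1.le ?_
    rw [neg_div, neg_div, neg_le_neg_iff]
    refine div_le_div_of_nonneg_right ?_ (Nat.cast_nonneg N)
    have : (k : ℝ) ≤ (N : ℝ) - 1 := by
      have := k.isLt
      have : (k : ℝ) < (N : ℝ) := by exact_mod_cast this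
      linarith [(by exact_mod_cast Nat.lt_iff_add_one_le.mp k.isLt : (k:ℝ) + 1 ≤ N)]
    linarith
  -- e k ≤ 1, e 0 = 1
  have heM : ∀ k : Fin N, e k ≤ 1 :=
    fun k => Real.rpow_le_one hα0.le hα1.le (div_nonneg k.val.cast_nonneg N.cast_nonneg)
  -- the last index attains M
  have hlast : d ⟨N - 1, Nat.sub_lt hN one_pos⟩ = M := by
    simp only [hd, hM]
    congr 1
    have : ((N - 1 : ℕ) : ℝ) = (N : ℝ) - 1 := by
      rw [Nat.cast_sub hN]; simp
    rw [this]
  -- V⁻¹ = F * diagonal e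
  have hΛe : Λα * Matrix.diagonal (fun k : Fin N => ((e k : ℝ) : ℂ)) = 1 := by
    rw [hΛ, Matrix.diagonal_mul_diagonal]
    have : ∀ k : Fin N, ((d k : ℝ) : ℂ) * ((e k : ℝ) : ℂ) = 1 := by
      intro k
      rw [← Complex.ofReal_mul, ← Real.rpow_add hα0, neg_div, neg_add_cancel,
        Real.rpow_zero, Complex.ofReal_one]
    simp only [hd, he] at this
    simp only [he, this]
    exact Matrix.diagonal_one
  have hVinv : V⁻¹ = F * Matrix.diagonal (fun k : Fin N => ((e k : ℝ) : ℂ)) := by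
    refine Matrix.inv_eq_right_inv ?_
    rw [hV, Matrix.mul_assoc, ← Matrix.mul_assoc F.conjTranspose, hFF, Matrix.one_mul, hΛe]
  -- Λαᴴ = Λα
  have hΛH : Λα.conjTranspose = Λα := by
    rw [hΛ, Matrix.diagonal_conjTranspose]
    refine congrArg Matrix.diagonal (funext fun k => ?_)
    simp [Complex.star_def, Complex.conj_ofReal]
  -- ‖V‖ = M
  have hnormV : ‖Matrix.toEuclideanCLM (𝕜 := ℂ) V‖ = M := by
    have hVVH : V * V.conjTranspose =
        Matrix.diagonal (fun k : Fin N => ((d k : ℝ) : ℂ) * ((d k : ℝ) : ℂ)) := by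
      rw [hV, Matrix.conjTranspose_mul, Matrix.conjTranspose_conjTranspose, hΛH,
        Matrix.mul_assoc, ← Matrix.mul_assoc F.conjTranspose, hFF, Matrix.one_mul,
        hΛ, Matrix.diagonal_mul_diagonal]
    have hstar := CStarRing.norm_self_mul_star (x := Matrix.toEuclideanCLM (𝕜 := ℂ) V)
    have hmap : Matrix.toEuclideanCLM (𝕜 := ℂ) V * star (Matrix.toEuclideanCLM (𝕜 := ℂ) V) =
        Matrix.toEuclideanCLM (𝕜 := ℂ) (V * V.conjTranspose) := by
      rw [map_mul, ← map_star, Matrix.star_eq_conjTranspose]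
    rw [hmap, hVVH] at hstar
    have hdiag : ‖Matrix.toEuclideanCLM (𝕜 := ℂ)
        (Matrix.diagonal (fun k : Fin N => ((d k : ℝ) : ℂ) * ((d k : ℝ) : ℂ)))‖ = M * M := by
      refine norm_toEuclideanCLM_diagonal _ (M * M) ⟨N - 1, Nat.sub_lt hN one_pos⟩ ?_ ?_
      · intro k
        rw [norm_mul, Complex.norm_real, Real.norm_eq_abs, abs_of_pos (hd0 k)]
        exact mul_le_mul (hdM k) (hdM k) (hd0 k).le hM0.le
      · rw [norm_mul, Complex.norm_real, Real.norm_eq_abs,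
          abs_of_pos (hd0 _), hlast]
    rw [hdiag] at hstar
    exact (mul_self_inj (norm_nonneg _) hM0.le).mp hstar.symm
  -- ‖V⁻¹‖ = 1
  have hnormVinv : ‖Matrix.toEuclideanCLM (𝕜 := ℂ) V⁻¹‖ = 1 := by
    have hVVH : (V⁻¹).conjTranspose * V⁻¹ =
        Matrix.diagonal (fun k : Fin N => ((e k : ℝ) : ℂ) * ((e k : ℝ) : ℂ)) := by
      have heH : (Matrix.diagonal (fun k : Fin N => ((e k : ℝ) : ℂ))).conjTranspose =
          Matrix.diagonal (fun k : Fin N => ((e k : ℝ) : ℂ)) := by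
        rw [Matrix.diagonal_conjTranspose]
        refine congrArg Matrix.diagonal (funext fun k => ?_)
        simp [Complex.star_def, Complex.conj_ofReal]
      rw [hVinv, Matrix.conjTranspose_mul, heH, Matrix.mul_assoc,
        ← Matrix.mul_assoc F.conjTranspose, hFF, Matrix.one_mul,
        Matrix.diagonal_mul_diagonal]
    have hstar := CStarRing.norm_star_mul_self (x := Matrix.toEuclideanCLM (𝕜 := ℂ) V⁻¹)
    have hmap : star (Matrix.toEuclideanCLM (𝕜 := ℂ) V⁻¹) * Matrix.toEuclideanCLM (𝕜 := ℂ) V⁻¹ =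
        Matrix.toEuclideanCLM (𝕜 := ℂ) ((V⁻¹).conjTranspose * V⁻¹) := by
      rw [map_mul, ← map_star, Matrix.star_eq_conjTranspose]
    rw [hmap, hVVH] at hstar
    have hdiag : ‖Matrix.toEuclideanCLM (𝕜 := ℂ)
        (Matrix.diagonal (fun k : Fin N => ((e k : ℝ) : ℂ) * ((e k : ℝ) : ℂ)))‖ = 1 * 1 := by
      refine norm_toEuclideanCLM_diagonal _ (1 * 1) ⟨0, hN⟩ ?_ ?_
      · intro k
        rw [norm_mul, Complex.norm_real, Real.norm_eq_abs, abs_of_pos (he0 k)]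
        exact mul_le_mul (heM k) (heM k) (he0 k).le (by norm_num)
      · rw [norm_mul, Complex.norm_real, Real.norm_eq_abs, abs_of_pos (he0 _)]
        have : e ⟨0, hN⟩ = 1 := by
          simp only [he]
          norm_num
        rw [this]
    rw [hdiag] at hstar
    exact (mul_self_inj (norm_nonneg _) zero_le_one).mp hstar.symm
  constructor
  · rw [cond2, hnormV, hnormVinv, mul_one]
  · rw [cond2, hnormV, hnormVinv, mul_one]
    calc M ≤ α ^ (-1 : ℝ) := by
          refine Real.rpow_le_rpow_of_exponent_ge hα0 hα1.le ?_
          rw [neg_div, neg_le_neg_iff]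
          rw [div_le_one (by exact_mod_cast hN)]
          linarith
      _ = 1 / α := by rw [Real.rpow_neg_one, one_div]
end

section
/- Consider the scalar Parareal error recurrence over an infinite time horizon: $e_{n+1}^{k+1} = \beta e_n^{k+1} + \gamma e_n^k$ for $n \geq 0$, $e_0^k = 0$ for all $k$, with $\beta, \gamma \in \mathbb{C}$, $|\beta| < 1$. If $\sup_n |e_n^0| = E_0 < \infty$, then for all $k \geq 0$, $\sup_n |e_n^k| \leq \left(\frac{|\gamma|}{1 - |\beta|}\right)^k E_0$. -/
/-- Linear long-time Parareal convergence: for the error recurrence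
`e_{n+1}^{k+1} = β e_n^{k+1} + γ e_n^k` with `e_0^k = 0` and `|β| < 1`, a uniform bound
`|e_n^0| ≤ E₀` propagates as `|e_n^k| ≤ (|γ|/(1-|β|))^k E₀`. -/
theorem parareal_linear_convergence_bound
    (β γ : ℂ) (hβ : ‖β‖ < 1)
    (e : ℕ → ℕ → ℂ)
    (h0 : ∀ k, e 0 k = 0)
    (hrec : ∀ n k, e (n + 1) (k + 1) = β * e n (k + 1) + γ * e n k)
    (E0 : ℝ) (hE0 : ∀ n, ‖e n 0‖ ≤ E0) :
    ∀ k n, ‖e n k‖ ≤ (‖γ‖ / (1 - ‖β‖)) ^ k * E0 := by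
  have hb1 : (0:ℝ) < 1 - ‖β‖ := by linarith
  intro k
  induction k with
  | zero => intro n; simpa using hE0 n
  | succ k ih =>
    set C : ℝ := (‖γ‖ / (1 - ‖β‖)) ^ k * E0 with hC
    have hC0 : 0 ≤ C := le_trans (norm_nonneg _) (ih 0)
    have key : ‖γ‖ / (1 - ‖β‖) * C =
        ‖β‖ * (‖γ‖ / (1 - ‖β‖) * C) + ‖γ‖ * C := by
      field_simp
      ring
    have goal : ∀ n, ‖e n (k + 1)‖ ≤
        ‖γ‖ / (1 - ‖β‖) * C := by
      intro n
      induction n with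
      | zero =>
        rw [h0]
        simp
        positivity
      | succ n ihn =>
        rw [hrec]
        calc ‖β * e n (k + 1) + γ * e n k‖
            ≤ ‖β * e n (k + 1)‖ + ‖γ * e n k‖ :=
              norm_add_le _ _
          _ = ‖β‖ * ‖e n (k + 1)‖ +
              ‖γ‖ * ‖e n k‖ := by
              rw [norm_mul, norm_mul]
          _ ≤ ‖β‖ * (‖γ‖ / (1 - ‖β‖) * C) +
              ‖γ‖ * C := by
              have h1 := mul_le_mul_of_nonneg_left ihn (norm_nonneg β)
              have h2 := mul_le_mul_of_nonneg_left (ih n) (norm_nonneg γ)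
              linarith
          _ = ‖γ‖ / (1 - ‖β‖) * C := key.symm
    intro n
    calc ‖e n (k + 1)‖ ≤ ‖γ‖ / (1 - ‖β‖) * C := goal n
      _ = (‖γ‖ / (1 - ‖β‖)) ^ (k + 1) * E0 := by rw [hC]; ring
end
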